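/- arXiv:1903.00303 — 4 statements merged into one kernel-verified Lean document; each statement's English description precedes it below -/
import Mathlib

section
/- For any diversity game G = (R, B, (≻_i)) with |R| = 1, there exists a core stable partition. Specifically, letting Θ_r be the set of red ratios of individually rational coalitions containing the unique red agent r, the partition consisting of a coalition S* containing r with θ_R(S*) equal to r's most preferred ratio in Θ_r, together with singletons for all remaining blue agents, is core stable. -/
/-!
Let `S` block the partition. Every member of `S` strictly prefers `θ(S)` to the ratio of her
own coalition, which is individually rational (`S*` by assumption, singletons trivially), so by
transitivity she strictly prefers `θ(S)` to her stand-alone ratio; in particular `S` is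
individually rational. If `r ∉ S`, then `θ(S) = 0` is every member's stand-alone ratio, which
contradicts irreflexivity. If `r ∈ S`, then `r` prefers `θ(S)` to `θ(S*)`, while the choice of
`S*` gives the opposite preference.
-/

open Finset

/-- The red ratio of a finite coalition. -/
def redRatio {α : Type*} (red : α → Prop) [DecidablePred red] (S : Finset α) : ℚ :=
  ((S.filter red).card : ℚ) / (S.card : ℚ)

/-- A coalition is individually rational if every member weakly prefers its red
ratio to that of her singleton (`1` for red agents, `0` for blue agents). -/
def IndividuallyRational {α : Type*} (red : α → Prop) [DecidablePred red]
    (pref : α → ℚ → ℚ → Prop) (S : Finset α) : Prop :=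
  ∀ i ∈ S, redRatio red S = (if red i then (1 : ℚ) else 0) ∨
    pref i (redRatio red S) (if red i then (1 : ℚ) else 0)

section

variable {α : Type*} {red : α → Prop} [DecidablePred red] {pref : α → ℚ → ℚ → Prop}

lemma redRatio_singleton (i : α) : redRatio red {i} = if red i then 1 else 0 := by
  by_cases hi : red i <;> simp [redRatio, filter_singleton, hi]

lemma redRatio_eq_zero_of_forall_not_red {S : Finset α} (hS : ∀ i ∈ S, ¬ red i) :
    redRatio red S = 0 := by
  simp [redRatio, filter_false_of_mem hS]

lemma individuallyRational_singleton (i : α) : IndividuallyRational red pref {i} := by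
  intro j hj
  rw [mem_singleton.mp hj]
  exact Or.inl (redRatio_singleton i)

lemma IndividuallyRational.pref_standAlone_of_pref {T : Finset α} {i : α} {θ : ℚ}
    (hT : IndividuallyRational red pref T) (htrans : Transitive (pref i)) (hi : i ∈ T)
    (h : pref i θ (redRatio red T)) : pref i θ (if red i then 1 else 0) := by
  rcases hT i hi with hT | hT
  · exact hT ▸ h
  · exact htrans h hT

lemma exists_individuallyRational_mem_insert_singletons [Fintype α] [DecidableEq α]
    {Sstar : Finset α} (hIR : IndividuallyRational red pref Sstar) (i : α) :
    ∃ T ∈ insert Sstar ((univ \ Sstar).image fun b => ({b} : Finset α)),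
      i ∈ T ∧ IndividuallyRational red pref T := by
  by_cases hi : i ∈ Sstar
  · exact ⟨Sstar, mem_insert_self _ _, hi, hIR⟩
  · exact ⟨{i}, mem_insert_of_mem (mem_image.mpr ⟨i, by simp [hi], rfl⟩),
      mem_singleton_self i, individuallyRational_singleton i⟩

end

theorem stmt1_general {α : Type*} [Fintype α] [DecidableEq α] (red : α → Prop) [DecidablePred red]
    (pref : α → ℚ → ℚ → Prop)
    (hirr : ∀ i (θ : ℚ), ¬ pref i θ θ)
    (htrans : ∀ i, Transitive (pref i))
    (r : α) (hr : univ.filter red = {r})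
    (Sstar : Finset α) (hrS : r ∈ Sstar)
    (hIR : IndividuallyRational red pref Sstar)
    (hbest : ∀ S : Finset α, r ∈ S → IndividuallyRational red pref S →
      redRatio red S ≠ redRatio red Sstar → pref r (redRatio red Sstar) (redRatio red S))
    (π : Finset (Finset α))
    (hπ : π = insert Sstar ((univ \ Sstar).image fun b => ({b} : Finset α))) :
    ¬ ∃ S : Finset α, S.Nonempty ∧
        ∀ i ∈ S, ∀ T ∈ π, i ∈ T → pref i (redRatio red S) (redRatio red T) := by
  rintro ⟨S, ⟨x, hx⟩, hblock⟩
  subst hπ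
  have hred : ∀ i, red i ↔ i = r := fun i => by simpa using Finset.ext_iff.mp hr i
  have hstandAlone : ∀ i ∈ S, pref i (redRatio red S) (if red i then 1 else 0) := by
    intro i hi
    obtain ⟨T, hTπ, hiT, hT⟩ := exists_individuallyRational_mem_insert_singletons hIR i
    exact hT.pref_standAlone_of_pref (htrans i) hiT (hblock i hi T hTπ hiT)
  by_cases hrS' : r ∈ S
  · have hSIR : IndividuallyRational red pref S := fun i hi => Or.inr (hstandAlone i hi)
    have hprefr := hblock r hrS' Sstar (mem_insert_self _ _) hrS
    have hne : redRatio red S ≠ redRatio red Sstar := fun h => hirr r _ (h ▸ hprefr)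
    exact hirr r _ (htrans r hprefr (hbest S hrS' hSIR hne))
  · have hS0 : redRatio red S = 0 :=
      redRatio_eq_zero_of_forall_not_red fun i hi hri => hrS' ((hred i).mp hri ▸ hi)
    have hxr : ¬ red x := fun h => hrS' ((hred x).mp h ▸ hx)
    have hx0 := hstandAlone x hx
    rw [hS0, if_neg hxr] at hx0
    exact hirr x 0 hx0

/-- In a diversity game with a single red agent `r`, the partition
consisting of an individually rational coalition `S*` containing `r` whose red
ratio is `r`'s most preferred ratio among red ratios of individually rational
coalitions containing `r`, together with singletons of the remaining blue agents,
is core stable. -/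
theorem stmt1 {α : Type*} [Fintype α] [DecidableEq α] (red : α → Prop) [DecidablePred red]
    (pref : α → ℚ → ℚ → Prop)
    (hirr : ∀ i (θ : ℚ), ¬ pref i θ θ)
    (htrans : ∀ i, Transitive (pref i))
    (hasym : ∀ i (θ θ' : ℚ), pref i θ θ' → ¬ pref i θ' θ)
    (r : α) (hr : univ.filter red = {r})
    (Sstar : Finset α) (hrS : r ∈ Sstar)
    (hIR : IndividuallyRational red pref Sstar)
    (hbest : ∀ S : Finset α, r ∈ S → IndividuallyRational red pref S →
      redRatio red S ≠ redRatio red Sstar → pref r (redRatio red Sstar) (redRatio red S))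
    (π : Finset (Finset α))
    (hπ : π = insert Sstar ((univ \ Sstar).image fun b => ({b} : Finset α))) :
    ¬ ∃ S : Finset α, S.Nonempty ∧
        ∀ i ∈ S, ∀ T ∈ π, i ∈ T → pref i (redRatio red S) (redRatio red T) :=
  stmt1_general red pref hirr htrans r hr Sstar hrS hIR hbest π hπ
end

section
/- Every hedonic game satisfying the top coalition property has a nonempty core, and a core stable partition is obtained by iteratively selecting a top coalition of the remaining agents, adding it to the partition, and removing its members. -/
open Finset

variable {α : Type*}

/-- `T` is a top coalition of `S`: every member of `T` weakly prefers `T` to any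
coalition contained in `S` to which she belongs. -/
def TopCoalition (pref : α → Finset α → Finset α → Prop) (T S : Finset α) : Prop :=
  T ⊆ S ∧ T.Nonempty ∧ ∀ i ∈ T, ∀ T' ⊆ S, i ∈ T' → pref i T T'

/-- `TopChain pref L rem`: the list `L` of coalitions is obtained by iteratively
selecting a top coalition of the remaining agents `rem`, until no agent remains. -/
def TopChain [DecidableEq α] (pref : α → Finset α → Finset α → Prop) :
    List (Finset α) → Finset α → Prop
  | [], rem => rem = ∅
  | T :: L, rem => TopCoalition pref T rem ∧ TopChain pref L (rem \ T)

/-- A partition is core stable if no nonempty coalition `S` exists all of whose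
members strictly prefer `S` to their own coalition. -/
def CoreStableH (pref : α → Finset α → Finset α → Prop) (π : Finset (Finset α)) : Prop :=
  ¬ ∃ S : Finset α, S.Nonempty ∧
      ∀ i ∈ S, ∀ T ∈ π, i ∈ T → pref i S T ∧ ¬ pref i T S

lemma topChain_props [DecidableEq α] (pref : α → Finset α → Finset α → Prop) :
    ∀ (L : List (Finset α)) (rem : Finset α), TopChain pref L rem →
      (∀ S ∈ L, S.Nonempty) ∧ (∀ S ∈ L, S ⊆ rem) ∧ (∀ a ∈ rem, ∃ S ∈ L, a ∈ S) ∧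
      (∀ a : α, ∀ S₁ ∈ L, ∀ S₂ ∈ L, a ∈ S₁ → a ∈ S₂ → S₁ = S₂)
  | [], rem, h => by
    simp only [TopChain] at h
    subst h
    simp
  | T :: L, rem, h => by
    obtain ⟨⟨hsub, hne, _⟩, hchain⟩ := h
    obtain ⟨ih1, ih2, ih3, ih4⟩ := topChain_props pref L (rem \ T) hchain
    refine ⟨?_, ?_, ?_, ?_⟩
    · intro S hS
      rcases List.mem_cons.mp hS with rfl | hS
      · exact hne
      · exact ih1 S hS
    · intro S hS
      rcases List.mem_cons.mp hS with rfl | hS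
      · exact hsub
      · exact (ih2 S hS).trans (Finset.sdiff_subset)
    · intro a ha
      by_cases haT : a ∈ T
      · exact ⟨T, List.mem_cons_self, haT⟩
      · obtain ⟨S, hS, haS⟩ := ih3 a (Finset.mem_sdiff.mpr ⟨ha, haT⟩)
        exact ⟨S, List.mem_cons_of_mem _ hS, haS⟩
    · intro a S₁ hm1 S₂ hm2 ha1 ha2
      rcases List.mem_cons.mp hm1 with rfl | h1 <;> rcases List.mem_cons.mp hm2 with rfl | h2
      · rfl
      · exact absurd ha1 (fun h => (Finset.mem_sdiff.mp (ih2 S₂ h2 ha2)).2 h)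
      · exact absurd ha2 (fun h => (Finset.mem_sdiff.mp (ih2 S₁ h1 ha1)).2 h)
      · exact ih4 a S₁ h1 S₂ h2 ha1 ha2

lemma topChain_block [DecidableEq α] (pref : α → Finset α → Finset α → Prop) :
    ∀ (L : List (Finset α)) (rem : Finset α), TopChain pref L rem →
      ∀ S : Finset α, S ⊆ rem → S.Nonempty →
      (∀ i ∈ S, ∀ T ∈ L, i ∈ T → pref i S T ∧ ¬ pref i T S) → False
  | [], rem, h, S, hSsub, hSne, _ => by
    simp only [TopChain] at h
    subst h
    exact hSne.ne_empty (Finset.subset_empty.mp hSsub)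
  | T :: L, rem, h, S, hSsub, hSne, hblock => by
    obtain ⟨⟨hsub, hne, htopT⟩, hchain⟩ := h
    have hdisj : ∀ i ∈ S, i ∉ T := by
      intro i hiS hiT
      exact (hblock i hiS T (List.mem_cons_self) hiT).2
        (htopT i hiT S hSsub hiS)
    refine topChain_block pref L (rem \ T) hchain S ?_ hSne ?_
    · intro i hi
      exact Finset.mem_sdiff.mpr ⟨hSsub hi, hdisj i hi⟩
    · intro i hiS T' hT' hiT'
      exact hblock i hiS T' (List.mem_cons_of_mem _ hT') hiT'

lemma topChain_exists [DecidableEq α] (pref : α → Finset α → Finset α → Prop)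
    (htop : ∀ S : Finset α, S.Nonempty → ∃ T, TopCoalition pref T S)
    (rem : Finset α) : ∃ L, TopChain pref L rem := by
  induction rem using Finset.strongInduction with
  | _ rem ih =>
    rcases rem.eq_empty_or_nonempty with rfl | hne
    · exact ⟨[], rfl⟩
    · obtain ⟨T, hT⟩ := htop rem hne
      obtain ⟨L, hL⟩ := ih (rem \ T) (Finset.sdiff_ssubset hT.1 hT.2.1)
      exact ⟨T :: L, hT, hL⟩

lemma topChain_conclusion [Fintype α] [DecidableEq α]
    (pref : α → Finset α → Finset α → Prop)
    (L : List (Finset α)) (h : TopChain pref L Finset.univ) :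
    ((∀ S ∈ L.toFinset, S.Nonempty) ∧ ∀ a : α, ∃! S, S ∈ L.toFinset ∧ a ∈ S) ∧
      CoreStableH pref L.toFinset := by
  obtain ⟨h1, _h2, h3, h4⟩ := topChain_props pref L Finset.univ h
  refine ⟨⟨?_, ?_⟩, ?_⟩
  · intro S hS; exact h1 S (List.mem_toFinset.mp hS)
  · intro a
    obtain ⟨S, hS, haS⟩ := h3 a (Finset.mem_univ a)
    refine ⟨S, ⟨List.mem_toFinset.mpr hS, haS⟩, ?_⟩
    rintro S' ⟨hS', haS'⟩
    exact h4 a S' (List.mem_toFinset.mp hS') S hS haS' haS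
  · rintro ⟨S, hSne, hblock⟩
    refine topChain_block pref L Finset.univ h S (Finset.subset_univ S) hSne ?_
    intro i hiS T hT hiT
    exact hblock i hiS T (List.mem_toFinset.mpr hT) hiT

/-- Every hedonic game (with complete, transitive weak preferences
over coalitions) satisfying the top coalition property has a nonempty core, and
any partition obtained by iteratively selecting a top coalition of the remaining
agents and removing its members is core stable. -/
theorem stmt3 {α : Type*} [Fintype α] [DecidableEq α]
    (pref : α → Finset α → Finset α → Prop)
    (hrefl : ∀ i S, pref i S S)
    (htrans : ∀ i, Transitive (pref i))
    (htotal : ∀ (i : α) (S T : Finset α), i ∈ S → i ∈ T → pref i S T ∨ pref i T S)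
    (htop : ∀ S : Finset α, S.Nonempty → ∃ T, TopCoalition pref T S) :
    (∃ π : Finset (Finset α),
      ((∀ S ∈ π, S.Nonempty) ∧ ∀ a : α, ∃! S, S ∈ π ∧ a ∈ S) ∧ CoreStableH pref π) ∧
    ∀ L : List (Finset α), TopChain pref L Finset.univ →
      ((∀ S ∈ L.toFinset, S.Nonempty) ∧ ∀ a : α, ∃! S, S ∈ L.toFinset ∧ a ∈ S) ∧
      CoreStableH pref L.toFinset := by
  constructor
  · obtain ⟨L, hL⟩ := topChain_exists pref htop (Finset.univ : Finset α)
    exact ⟨L.toFinset, topChain_conclusion pref L hL⟩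
  · exact fun L hL => topChain_conclusion pref L hL
end

section
/- Given a partition π of a diversity game with n agents, deciding whether some coalition blocks π can be done by checking, for every coalition size s ∈ [n] and red count r ∈ {0,...,|R|}, whether the set S_{s,r} of agents who strictly prefer ratio r/s to the red ratio of their current coalition contains at least s agents of which at least r are red and at least s - r are blue. Formally: π is not core stable if and only if there exist s, r with r ≤ s such that |S_{s,r} ∩ R| ≥ r and |S_{s,r} ∩ B| ≥ s - r. -/
open Finset

/-- A partition (given by the map `part` sending each agent to her
coalition) is not core stable if and only if there exist a size `s ∈ [n]` and a
red count `r ≤ s` (with `r ≤ |R|`) such that the set `S_{s,r}` of agents strictly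
preferring ratio `r/s` to their current red ratio contains at least `r` red agents
and at least `s - r` blue agents. -/
theorem stmt9 {α : Type*} [Fintype α] [DecidableEq α] (red : α → Prop) [DecidablePred red]
    (pref : α → ℚ → ℚ → Prop) [∀ i a b, Decidable (pref i a b)]
    (part : α → Finset α)
    (hmem : ∀ i, i ∈ part i)
    (hcons : ∀ i j : α, i ∈ part j → part i = part j) :
    (∃ S : Finset α, S.Nonempty ∧
        ∀ i ∈ S, pref i (redRatio red S) (redRatio red (part i))) ↔
    ∃ s r : ℕ, 1 ≤ s ∧ s ≤ Fintype.card α ∧ r ≤ s ∧ r ≤ (univ.filter red).card ∧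
      r ≤ (univ.filter fun i =>
            red i ∧ pref i ((r : ℚ) / (s : ℚ)) (redRatio red (part i))).card ∧
      s - r ≤ (univ.filter fun i =>
            ¬ red i ∧ pref i ((r : ℚ) / (s : ℚ)) (redRatio red (part i))).card := by
  constructor
  · rintro ⟨S, hS, hpref⟩
    refine ⟨S.card, (S.filter red).card, hS.card_pos, S.card_le_univ, S.card_filter_le _,
      card_le_card (filter_subset_filter _ (subset_univ S)), ?_, ?_⟩
    · refine card_le_card ?_
      intro i hi
      rw [mem_filter] at hi
      rw [mem_filter]
      exact ⟨mem_univ i, hi.2, hpref i hi.1⟩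
    · have hsplit : (S.filter red).card + (S.filter fun i => ¬ red i).card = S.card :=
        card_filter_add_card_filter_not _
      have : S.card - (S.filter red).card = (S.filter fun i => ¬ red i).card := by omega
      rw [this]
      refine card_le_card ?_
      intro i hi
      rw [mem_filter] at hi
      rw [mem_filter]
      exact ⟨mem_univ i, hi.2, hpref i hi.1⟩
  · rintro ⟨s, r, hs1, hsn, hrs, hrR, hr, hb⟩
    obtain ⟨A, hA, hAcard⟩ := Finset.exists_subset_card_eq hr
    obtain ⟨B, hB, hBcard⟩ := Finset.exists_subset_card_eq hb
    have hAred : ∀ i ∈ A, red i ∧ pref i ((r : ℚ) / (s : ℚ)) (redRatio red (part i)) := by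
      intro i hi; exact (mem_filter.mp (hA hi)).2
    have hBblue : ∀ i ∈ B, ¬ red i ∧ pref i ((r : ℚ) / (s : ℚ)) (redRatio red (part i)) := by
      intro i hi; exact (mem_filter.mp (hB hi)).2
    have hdisj : Disjoint A B := by
      rw [Finset.disjoint_left]
      intro i hiA hiB
      exact (hBblue i hiB).1 (hAred i hiA).1
    have hcard : (A ∪ B).card = s := by
      rw [card_union_of_disjoint hdisj, hAcard, hBcard]; omega
    have hfilt : (A ∪ B).filter red = A := by
      ext i
      simp only [mem_filter, mem_union]
      constructor
      · rintro ⟨hi | hi, hred⟩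
        · exact hi
        · exact absurd hred (hBblue i hi).1
      · intro hi; exact ⟨Or.inl hi, (hAred i hi).1⟩
    have hratio : redRatio red (A ∪ B) = (r : ℚ) / (s : ℚ) := by
      rw [redRatio, hfilt, hAcard, hcard]
    refine ⟨A ∪ B, ?_, ?_⟩
    · rw [← card_pos, hcard]; omega
    · intro i hi
      rw [hratio]
      rcases mem_union.mp hi with h | h
      · exact (hAred i h).2
      · exact (hBblue i h).2
end

section
/- Every diversity game in which all agents have single-peaked preferences over the red ratio admits an individually stable partition. -/
open Finset

/-- The set `Θ` of possible red ratios `r/s`, `0 ≤ r ≤ |R|`, `1 ≤ s ≤ |R|+|B|`. -/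
def ratioSet {α : Type*} [Fintype α] (red : α → Prop) [DecidablePred red] : Finset ℚ :=
  (Finset.Icc 1 (Fintype.card α)).biUnion fun s =>
    (Finset.range ((univ.filter red).card + 1)).image fun r : ℕ => (r : ℚ) / (s : ℚ)

section HDGAux

variable {α : Type*} [Fintype α] [DecidableEq α]
variable (red : α → Prop) [DecidablePred red]

/-- The ratio an agent gets when alone. -/
def hdgMono (a : α) : ℚ := if red a then 1 else 0

lemma redRatio_singleton_s16 (a : α) : redRatio red {a} = hdgMono red a := by
  by_cases h : red a <;>
    simp [redRatio, hdgMono, filter_singleton, h]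

lemma redRatio_pair_rr {i x : α} (hix : i ≠ x) (hi : red i) (hx : red x) :
    redRatio red {i, x} = 1 := by
  have h1 : ({i, x} : Finset α).filter red = {i, x} := by
    apply filter_true_of_mem
    intro a ha
    rcases mem_insert.mp ha with rfl | ha
    · exact hi
    · rw [mem_singleton.mp ha]; exact hx
  have h2 : ({i, x} : Finset α).card = 2 := by
    rw [card_insert_of_notMem (by simp [hix]), card_singleton]
  rw [redRatio, h1, h2]
  norm_num

lemma redRatio_pair_bb {i x : α} (hix : i ≠ x) (hi : ¬ red i) (hx : ¬ red x) :
    redRatio red {i, x} = 0 := by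
  have h1 : ({i, x} : Finset α).filter red = ∅ := by
    apply filter_false_of_mem
    intro a ha
    rcases mem_insert.mp ha with rfl | ha
    · exact hi
    · rw [mem_singleton.mp ha]; exact hx
  rw [redRatio, h1]
  simp

lemma redRatio_pair_rb {i x : α} (hix : i ≠ x) (hi : red i) (hx : ¬ red x) :
    redRatio red {i, x} = 1/2 := by
  have h1 : ({i, x} : Finset α).filter red = {i} := by
    ext a
    simp only [mem_filter, mem_insert, mem_singleton]
    constructor
    · rintro ⟨rfl | rfl, hr⟩
      · rfl
      · exact absurd hr hx
    · rintro rfl; exact ⟨Or.inl rfl, hi⟩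
  have h2 : ({i, x} : Finset α).card = 2 := by
    rw [card_insert_of_notMem (by simp [hix]), card_singleton]
  rw [redRatio, h1, h2, card_singleton]
  norm_num

lemma redRatio_pair' {i x : α} (hix : i ≠ x) :
    redRatio red (insert i {x}) = redRatio red {i, x} := rfl

end HDGAux

section HDGAux2

set_option linter.unusedSectionVars false

variable {α : Type*} [Fintype α] [DecidableEq α]
variable (red : α → Prop) [DecidablePred red] (pref : α → ℚ → ℚ → Prop)

/-- The conclusion of the main theorem, as a definition. -/
def hdgConcl : Prop :=
  ∃ π : Finset (Finset α),
    ((∀ S ∈ π, S.Nonempty) ∧ ∀ a : α, ∃! S, S ∈ π ∧ a ∈ S) ∧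
    ¬ ∃ (i : α) (S : Finset α), (S ∈ π ∨ S = ∅) ∧ i ∉ S ∧
        (∀ T ∈ π, i ∈ T →
          pref i (redRatio red (insert i S)) (redRatio red T)) ∧
        (∀ j ∈ S, redRatio red (insert i S) = redRatio red S ∨
          pref j (redRatio red (insert i S)) (redRatio red S))

lemma hdg_asymm (hirr : ∀ i (θ : ℚ), ¬ pref i θ θ) (htrans : ∀ i, Transitive (pref i))
    {i : α} {a b : ℚ} (h : pref i a b) : ¬ pref i b a :=
  fun h' => hirr i a (htrans i h h')

/-- The all-singletons partition is individually stable provided no red/blue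
pair mutually prefers ratio 1/2 to being alone. -/
lemma hdg_singletons (hirr : ∀ i (θ : ℚ), ¬ pref i θ θ) (htrans : ∀ i, Transitive (pref i))
    (h : ∀ a b, red a → ¬ red b → ¬ (pref a (1/2 : ℚ) 1 ∧ pref b (1/2 : ℚ) 0)) :
    hdgConcl red pref := by
  refine ⟨univ.image fun a => {a}, ⟨⟨?_, ?_⟩, ?_⟩⟩
  · intro S hS
    obtain ⟨a, -, rfl⟩ := mem_image.mp hS
    exact ⟨a, mem_singleton_self a⟩
  · intro a
    refine ⟨{a}, ⟨mem_image_of_mem _ (mem_univ a), mem_singleton_self a⟩, ?_⟩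
    rintro S ⟨hS, haS⟩
    obtain ⟨b, -, rfl⟩ := mem_image.mp hS
    rw [mem_singleton.mp haS]
  · rintro ⟨i, S, hS, hiS, hwant, hcons⟩
    have hw : pref i (redRatio red (insert i S)) (redRatio red {i}) :=
      hwant {i} (mem_image_of_mem _ (mem_univ i)) (mem_singleton_self i)
    rcases hS with hS | rfl
    swap
    · -- S = ∅
      rw [show (insert i (∅ : Finset α)) = {i} from rfl] at hw
      exact hirr _ _ hw
    obtain ⟨x, -, rfl⟩ := mem_image.mp hS
    have hix : i ≠ x := fun he => hiS (he ▸ mem_singleton_self x)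
    have hcx : redRatio red (insert i {x}) = redRatio red {x} ∨
        pref x (redRatio red (insert i {x})) (redRatio red {x}) :=
      hcons x (mem_singleton_self x)
    by_cases hi : red i <;> by_cases hx : red x
    · -- both red
      rw [redRatio_pair' red hix, redRatio_pair_rr red hix hi hx,
        redRatio_singleton_s16, hdgMono, if_pos hi] at hw
      exact hirr _ _ hw
    · -- i red, x not red
      rw [redRatio_pair' red hix, redRatio_pair_rb red hix hi hx,
        redRatio_singleton_s16, hdgMono, if_pos hi] at hw
      rw [redRatio_pair' red hix, redRatio_pair_rb red hix hi hx,
        redRatio_singleton_s16, hdgMono, if_neg hx] at hcx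
      rcases hcx with hcx | hcx
      · norm_num at hcx
      · exact h i x hi hx ⟨hw, hcx⟩
    · -- i not red, x red
      rw [redRatio_pair' red hix,
        show ({i, x} : Finset α) = {x, i} by ext y; simp [or_comm],
        redRatio_pair_rb red (Ne.symm hix) hx hi,
        redRatio_singleton_s16, hdgMono, if_neg hi] at hw
      rw [redRatio_pair' red hix,
        show ({i, x} : Finset α) = {x, i} by ext y; simp [or_comm],
        redRatio_pair_rb red (Ne.symm hix) hx hi,
        redRatio_singleton_s16, hdgMono, if_pos hx] at hcx
      rcases hcx with hcx | hcx
      · norm_num at hcx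
      · exact h x i hx hi ⟨hcx, hw⟩
    · -- both not red
      rw [redRatio_pair' red hix, redRatio_pair_bb red hix hi hx,
        redRatio_singleton_s16, hdgMono, if_neg hi] at hw
      exact hirr _ _ hw

end HDGAux2

section HDGAux3

set_option linter.unusedSectionVars false

variable {α : Type*} [Fintype α] [DecidableEq α]
variable (red : α → Prop) [DecidablePred red] (pref : α → ℚ → ℚ → Prop) (side : α → Prop)

/-- Invariants maintained by the closure process. -/
def hdgInv (M : Finset α) : Prop :=
  (∀ i ∈ M, red i → pref i (redRatio red M) 1) ∧
  (∀ j ∈ M, ¬ red j → pref j (redRatio red M) 0) ∧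
  (∀ a ∈ M, side a → redRatio red M = 1/2 ∨ pref a (redRatio red M) (1/2))

/-- No outside agent both wants to join `M` and is accepted by all members. -/
def hdgStall (M : Finset α) : Prop :=
  ∀ z ∉ M, ¬ (pref z (redRatio red (insert z M)) (hdgMono red z) ∧
      ∀ j ∈ M, redRatio red (insert z M) = redRatio red M ∨
        pref j (redRatio red (insert z M)) (redRatio red M))

lemma hdg_closure (htrans : ∀ i, Transitive (pref i)) (M₀ : Finset α)
    (h2 : ∀ a, side a → a ∉ M₀ → pref a (hdgMono red a) (1/2)) :
    ∀ k (M : Finset α), (univ \ M).card ≤ k → M₀ ⊆ M → hdgInv red pref side M →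
      ∃ M', M₀ ⊆ M' ∧ hdgInv red pref side M' ∧ hdgStall red pref M' := by
  intro k
  induction k with
  | zero =>
    intro M hcard hsub hinv
    refine ⟨M, hsub, hinv, ?_⟩
    intro z hz
    exact absurd (mem_sdiff.mpr ⟨mem_univ z, hz⟩)
      (by rw [card_eq_zero.mp (Nat.le_zero.mp hcard)]; exact notMem_empty z)
  | succ k ih =>
    intro M hcard hsub hinv
    by_cases hstall : hdgStall red pref M
    · exact ⟨M, hsub, hinv, hstall⟩
    · rw [hdgStall] at hstall
      push_neg at hstall
      obtain ⟨z, hz, hwant, hcons⟩ := hstall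
      obtain ⟨hP1, hP2, hP3⟩ := hinv
      have hcard' : (univ \ insert z M).card ≤ k := by
        rw [sdiff_insert]
        have hzmem : z ∈ univ \ M := mem_sdiff.mpr ⟨mem_univ z, hz⟩
        have := card_erase_of_mem hzmem
        omega
      refine ih (insert z M) hcard' (hsub.trans (subset_insert z M)) ⟨?_, ?_, ?_⟩
      · -- P1
        intro i hi hired
        rcases mem_insert.mp hi with rfl | hi
        · rw [hdgMono, if_pos hired] at hwant; exact hwant
        · rcases hcons i hi with heq | hpref
          · rw [heq]; exact hP1 i hi hired
          · exact htrans i hpref (hP1 i hi hired)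
      · -- P2
        intro j hj hjblue
        rcases mem_insert.mp hj with rfl | hj
        · rw [hdgMono, if_neg hjblue] at hwant; exact hwant
        · rcases hcons j hj with heq | hpref
          · rw [heq]; exact hP2 j hj hjblue
          · exact htrans j hpref (hP2 j hj hjblue)
      · -- P3
        intro a ha haside
        rcases mem_insert.mp ha with rfl | ha
        · exact Or.inr (htrans a hwant (h2 a haside (fun hm => hz (hsub hm))))
        · rcases hcons a ha with heq | hpref
          · rw [heq]; exact hP3 a ha haside
          · rcases hP3 a ha haside with hhalf | hp
            · exact Or.inr (hhalf ▸ hpref)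
            · exact Or.inr (htrans a hpref hp)

/-- Main construction: given a balanced core `M₀` of ratio 1/2 whose members
all prefer 1/2 to being alone, such that all `side`-agents outside `M₀`
prefer being alone to ratio 1/2, and `side` covers one color of every
red/blue pair, there is an individually stable partition. -/
lemma hdg_main (hirr : ∀ i (θ : ℚ), ¬ pref i θ θ) (htrans : ∀ i, Transitive (pref i))
    (hcover : ∀ a b, red a → ¬ red b → side a ∨ side b)
    (M₀ : Finset α) (hne : M₀.Nonempty)
    (hratio : redRatio red M₀ = 1/2)
    (h1r : ∀ i ∈ M₀, red i → pref i (1/2 : ℚ) 1)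
    (h1b : ∀ j ∈ M₀, ¬ red j → pref j (1/2 : ℚ) 0)
    (h2 : ∀ a, side a → a ∉ M₀ → pref a (hdgMono red a) (1/2)) :
    hdgConcl red pref := by
  have asym : ∀ {i : α} {a b : ℚ}, pref i a b → ¬ pref i b a :=
    @fun i a b h h' => hirr i a (htrans i h h')
  -- initial invariant
  have hinv₀ : hdgInv red pref side M₀ := by
    refine ⟨?_, ?_, fun a _ _ => Or.inl hratio⟩
    · intro i hi hired; rw [hratio]; exact h1r i hi hired
    · intro j hj hjblue; rw [hratio]; exact h1b j hj hjblue
  obtain ⟨M, hsub, ⟨hP1, hP2, hP3⟩, hstall⟩ :=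
    hdg_closure red pref side htrans M₀ h2 (univ \ M₀).card M₀ le_rfl
      (Finset.Subset.refl M₀) hinv₀
  have hMne : M.Nonempty := hne.mono hsub
  -- the partition
  refine ⟨insert M ((univ \ M).image fun a => ({a} : Finset α)), ⟨⟨?_, ?_⟩, ?_⟩⟩
  · intro S hS
    rcases mem_insert.mp hS with rfl | hS
    · exact hMne
    · obtain ⟨a, -, rfl⟩ := mem_image.mp hS
      exact ⟨a, mem_singleton_self a⟩
  · intro a
    by_cases haM : a ∈ M
    · refine ⟨M, ⟨mem_insert_self _ _, haM⟩, ?_⟩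
      rintro S ⟨hS, haS⟩
      rcases mem_insert.mp hS with rfl | hS
      · rfl
      · obtain ⟨b, hb, rfl⟩ := mem_image.mp hS
        exact absurd ((mem_singleton.mp haS) ▸ haM) (mem_sdiff.mp hb).2
    · refine ⟨{a}, ⟨mem_insert_of_mem
        (mem_image_of_mem _ (mem_sdiff.mpr ⟨mem_univ a, haM⟩)), mem_singleton_self a⟩, ?_⟩
      rintro S ⟨hS, haS⟩
      rcases mem_insert.mp hS with rfl | hS
      · exact absurd haS haM
      · obtain ⟨b, -, rfl⟩ := mem_image.mp hS
        rw [mem_singleton.mp haS]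
  -- no individually-stable deviation
  rintro ⟨i, S, hS, hiS, hwant, hcons⟩
  by_cases hiM : i ∈ M
  · -- deviator belongs to M
    have hw : pref i (redRatio red (insert i S)) (redRatio red M) :=
      hwant M (mem_insert_self _ _) hiM
    rcases hS with hS | rfl
    swap
    · -- S = ∅ : the deviator gets its mono ratio
      rw [show (insert i (∅ : Finset α)) = {i} from rfl, redRatio_singleton_s16] at hw
      by_cases hi : red i
      · rw [hdgMono, if_pos hi] at hw; exact asym (hP1 i hiM hi) hw
      · rw [hdgMono, if_neg hi] at hw; exact asym (hP2 i hiM hi) hw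
    rcases mem_insert.mp hS with rfl | hS
    · exact hiS hiM
    obtain ⟨x, hx, rfl⟩ := mem_image.mp hS
    have hxM : x ∉ M := (mem_sdiff.mp hx).2
    have hix : i ≠ x := fun he => hxM (he ▸ hiM)
    have hcx := hcons x (mem_singleton_self x)
    rw [redRatio_pair' red hix] at hw hcx
    by_cases hi : red i <;> by_cases hxr : red x
    · rw [redRatio_pair_rr red hix hi hxr] at hw
      exact asym (hP1 i hiM hi) hw
    · -- i red in M moves next to a single blue x : ratio 1/2
      rw [redRatio_pair_rb red hix hi hxr] at hw hcx
      rw [redRatio_singleton_s16, hdgMono, if_neg hxr] at hcx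
      have hcx' : pref x (1/2 : ℚ) 0 := by
        rcases hcx with hcx | hcx
        · norm_num at hcx
        · exact hcx
      rcases hcover i x hi hxr with hsi | hsx
      · rcases hP3 i hiM hsi with hhalf | hp
        · rw [hhalf] at hw; exact hirr _ _ hw
        · exact asym hp hw
      · have := h2 x hsx (fun hm => hxM (hsub hm))
        rw [hdgMono, if_neg hxr] at this
        exact asym this hcx'
    · -- i blue in M moves next to a single red x : ratio 1/2
      rw [show ({i, x} : Finset α) = {x, i} by ext y; simp [or_comm],
        redRatio_pair_rb red (Ne.symm hix) hxr hi] at hw hcx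
      rw [redRatio_singleton_s16, hdgMono, if_pos hxr] at hcx
      have hcx' : pref x (1/2 : ℚ) 1 := by
        rcases hcx with hcx | hcx
        · norm_num at hcx
        · exact hcx
      rcases hcover x i hxr hi with hsx | hsi
      · have := h2 x hsx (fun hm => hxM (hsub hm))
        rw [hdgMono, if_pos hxr] at this
        exact asym this hcx'
      · rcases hP3 i hiM hsi with hhalf | hp
        · rw [hhalf] at hw; exact hirr _ _ hw
        · exact asym hp hw
    · rw [redRatio_pair_bb red hix hi hxr] at hw
      exact asym (hP2 i hiM hi) hw
  · -- deviator is a singleton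
    have hiπ : ({i} : Finset α) ∈ insert M ((univ \ M).image fun a => ({a} : Finset α)) :=
      mem_insert_of_mem (mem_image_of_mem _ (mem_sdiff.mpr ⟨mem_univ i, hiM⟩))
    have hw : pref i (redRatio red (insert i S)) (redRatio red {i}) :=
      hwant {i} hiπ (mem_singleton_self i)
    rcases hS with hS | rfl
    swap
    · rw [show (insert i (∅ : Finset α)) = {i} from rfl] at hw
      exact hirr _ _ hw
    rcases mem_insert.mp hS with rfl | hS
    · -- deviator joins M : contradicts the stall property
      rw [redRatio_singleton_s16] at hw
      exact hstall i hiM ⟨hw, hcons⟩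
    obtain ⟨x, hx, rfl⟩ := mem_image.mp hS
    have hxM : x ∉ M := (mem_sdiff.mp hx).2
    have hix : i ≠ x := fun he => hiS (he ▸ mem_singleton_self x)
    have hcx := hcons x (mem_singleton_self x)
    rw [redRatio_pair' red hix] at hw hcx
    by_cases hi : red i <;> by_cases hxr : red x
    · rw [redRatio_pair_rr red hix hi hxr, redRatio_singleton_s16, hdgMono, if_pos hi] at hw
      exact hirr _ _ hw
    · -- single red i with single blue x : pair of ratio 1/2
      rw [redRatio_pair_rb red hix hi hxr, redRatio_singleton_s16, hdgMono, if_pos hi] at hw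
      rw [redRatio_pair_rb red hix hi hxr, redRatio_singleton_s16, hdgMono, if_neg hxr] at hcx
      have hcx' : pref x (1/2 : ℚ) 0 := by
        rcases hcx with hcx | hcx
        · norm_num at hcx
        · exact hcx
      rcases hcover i x hi hxr with hsi | hsx
      · have := h2 i hsi (fun hm => hiM (hsub hm))
        rw [hdgMono, if_pos hi] at this
        exact asym this hw
      · have := h2 x hsx (fun hm => hxM (hsub hm))
        rw [hdgMono, if_neg hxr] at this
        exact asym this hcx'
    · -- single blue i with single red x
      rw [show ({i, x} : Finset α) = {x, i} by ext y; simp [or_comm],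
        redRatio_pair_rb red (Ne.symm hix) hxr hi,
        redRatio_singleton_s16, hdgMono, if_neg hi] at hw
      rw [show ({i, x} : Finset α) = {x, i} by ext y; simp [or_comm],
        redRatio_pair_rb red (Ne.symm hix) hxr hi,
        redRatio_singleton_s16, hdgMono, if_pos hxr] at hcx
      have hcx' : pref x (1/2 : ℚ) 1 := by
        rcases hcx with hcx | hcx
        · norm_num at hcx
        · exact hcx
      rcases hcover x i hxr hi with hsx | hsi
      · have := h2 x hsx (fun hm => hxM (hsub hm))
        rw [hdgMono, if_pos hxr] at this
        exact asym this hcx'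
      · have := h2 i hsi (fun hm => hiM (hsub hm))
        rw [hdgMono, if_neg hi] at this
        exact asym this hw
    · rw [redRatio_pair_bb red hix hi hxr, redRatio_singleton_s16, hdgMono, if_neg hi] at hw
      exact hirr _ _ hw

end HDGAux3

section HDGAux4

set_option linter.unusedSectionVars false

variable {α : Type*} [Fintype α] [DecidableEq α]
variable (red : α → Prop) [DecidablePred red]

lemma hdg_mem_ratioSet {r s : ℕ} (hs1 : 1 ≤ s) (hsn : s ≤ Fintype.card α)
    (hr : r ≤ (univ.filter red).card) :
    ((r : ℚ) / (s : ℚ)) ∈ ratioSet red := by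
  rw [ratioSet, mem_biUnion]
  exact ⟨s, mem_Icc.mpr ⟨hs1, hsn⟩, mem_image.mpr ⟨r, mem_range.mpr (Nat.lt_succ_of_le hr), rfl⟩⟩

lemma hdg_zero_mem (h1 : 1 ≤ Fintype.card α) : (0 : ℚ) ∈ ratioSet red := by
  have := hdg_mem_ratioSet red (r := 0) (s := 1) le_rfl h1 (Nat.zero_le _)
  simpa using this

lemma hdg_one_mem (h1 : 1 ≤ Fintype.card α) (hr : 1 ≤ (univ.filter red).card) :
    (1 : ℚ) ∈ ratioSet red := by
  have := hdg_mem_ratioSet red (r := 1) (s := 1) le_rfl h1 hr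
  simpa using this

lemma hdg_half_mem (h2 : 2 ≤ Fintype.card α) (hr : 1 ≤ (univ.filter red).card) :
    (1/2 : ℚ) ∈ ratioSet red := by
  have := hdg_mem_ratioSet red (r := 1) (s := 2) (by norm_num) h2 hr
  norm_num at this ⊢
  convert this using 2 <;> norm_num

/-- ratio of a coalition with `m` red members out of `2m`. -/
lemma hdg_ratio_half {S : Finset α} {m : ℕ} (hm : 0 < m)
    (hred : (S.filter red).card = m) (htot : S.card = 2 * m) :
    redRatio red S = 1/2 := by
  rw [redRatio, hred, htot]
  have : (m : ℚ) ≠ 0 := Nat.cast_ne_zero.mpr hm.ne'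
  push_cast
  field_simp

end HDGAux4


/-- Every diversity game in which all agents have single-peaked
(strict linear) preferences over the set of possible red ratios admits an
individually stable partition: a partition `π` such that no agent `i` and
coalition `S ∈ π ∪ {∅}` other than `i`'s own coalition exist with `i` strictly
preferring `θ_R(S ∪ {i})` to `θ_R(π(i))` and every member of `S` weakly preferring
`θ_R(S ∪ {i})` to `θ_R(S)`. -/
theorem stmt16 {α : Type*} [Fintype α] [DecidableEq α] (red : α → Prop) [DecidablePred red]
    (pref : α → ℚ → ℚ → Prop)
    (hirr : ∀ i (θ : ℚ), ¬ pref i θ θ)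
    (htrans : ∀ i, Transitive (pref i))
    (htotal : ∀ i, ∀ θ ∈ ratioSet red, ∀ θ' ∈ ratioSet red,
      θ ≠ θ' → pref i θ θ' ∨ pref i θ' θ)
    (peak : α → ℚ)
    (hsp : ∀ i, ∀ θ1 ∈ ratioSet red, ∀ θ2 ∈ ratioSet red,
      ((θ1 < θ2 ∧ θ2 ≤ peak i) ∨ (θ2 < θ1 ∧ peak i ≤ θ2)) → pref i θ2 θ1) :
    ∃ π : Finset (Finset α),
      ((∀ S ∈ π, S.Nonempty) ∧ ∀ a : α, ∃! S, S ∈ π ∧ a ∈ S) ∧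
      ¬ ∃ (i : α) (S : Finset α), (S ∈ π ∨ S = ∅) ∧ i ∉ S ∧
          (∀ T ∈ π, i ∈ T →
            pref i (redRatio red (insert i S)) (redRatio red T)) ∧
          (∀ j ∈ S, redRatio red (insert i S) = redRatio red S ∨
            pref j (redRatio red (insert i S)) (redRatio red S)) := by
  classical
  -- it suffices to prove `hdgConcl red pref`
  suffices h : hdgConcl red pref by
    obtain ⟨π, h1, h2⟩ := h
    exact ⟨π, h1, h2⟩
  by_cases hcross : (∃ a, red a) ∧ (∃ b, ¬ red b)
  swap
  · -- only one color present: singletons work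
    apply hdg_singletons red pref hirr htrans
    intro a b ha hb
    exact absurd ⟨⟨a, ha⟩, ⟨b, hb⟩⟩ hcross
  obtain ⟨⟨a₀, ha₀⟩, ⟨b₀, hb₀⟩⟩ := hcross
  -- basic cardinalities and ratioSet membership
  have hcard2 : 2 ≤ Fintype.card α := by
    have : a₀ ≠ b₀ := fun h => hb₀ (h ▸ ha₀)
    haveI : Nontrivial α := ⟨a₀, b₀, this⟩
    exact Fintype.one_lt_card
  have hcard1 : 1 ≤ Fintype.card α := le_trans (by norm_num) hcard2
  have hrcard : 1 ≤ (univ.filter red).card :=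
    card_pos.mpr ⟨a₀, mem_filter.mpr ⟨mem_univ a₀, ha₀⟩⟩
  have h0m : (0 : ℚ) ∈ ratioSet red := hdg_zero_mem red hcard1
  have h1m : (1 : ℚ) ∈ ratioSet red := hdg_one_mem red hcard1 hrcard
  have hhm : (1/2 : ℚ) ∈ ratioSet red := hdg_half_mem red hcard2 hrcard
  -- dichotomies
  have hdichR : ∀ i, red i → pref i (1/2 : ℚ) 1 ∨ pref i (1 : ℚ) (1/2) := by
    intro i _
    exact htotal i (1/2) hhm 1 h1m (by norm_num)
  have hdichB : ∀ i, ¬ red i → pref i (1/2 : ℚ) 0 ∨ pref i (0 : ℚ) (1/2) := by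
    intro i _
    exact htotal i (1/2) hhm 0 h0m (by norm_num)
  -- non-solo agents
  set NSR : Finset α := univ.filter (fun x => red x ∧ pref x (1/2 : ℚ) 1) with hNSR
  set NSB : Finset α := univ.filter (fun x => ¬ red x ∧ pref x (1/2 : ℚ) 0) with hNSB
  by_cases hR0 : NSR = ∅
  · -- no non-solo red: singletons work
    apply hdg_singletons red pref hirr htrans
    intro a b ha hb ⟨hpa, _⟩
    exact (notMem_empty a) (hR0 ▸ (mem_filter.mpr ⟨mem_univ a, ha, hpa⟩))
  by_cases hB0 : NSB = ∅
  · apply hdg_singletons red pref hirr htrans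
    intro a b ha hb ⟨_, hpb⟩
    exact (notMem_empty b) (hB0 ▸ (mem_filter.mpr ⟨mem_univ b, hb, hpb⟩))
  -- both non-solo groups nonempty
  have hRne : NSR.Nonempty := nonempty_of_ne_empty hR0
  have hBne : NSB.Nonempty := nonempty_of_ne_empty hB0
  have hNSRr : ∀ x ∈ NSR, red x ∧ pref x (1/2 : ℚ) 1 := fun x hx => (mem_filter.mp hx).2
  have hNSBb : ∀ x ∈ NSB, ¬ red x ∧ pref x (1/2 : ℚ) 0 := fun x hx => (mem_filter.mp hx).2
  have hdisj : ∀ {x}, x ∈ NSR → x ∈ NSB → False := by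
    intro x hx hy
    exact (hNSBb x hy).1 (hNSRr x hx).1
  by_cases hc : NSB.card ≤ NSR.card
  · -- side = blue: all non-solo blues go into the core
    obtain ⟨NSR', hsub', hcard'⟩ := Finset.exists_subset_card_eq hc
    have hNSR'r : ∀ x ∈ NSR', red x ∧ pref x (1/2 : ℚ) 1 := fun x hx => hNSRr x (hsub' hx)
    apply hdg_main red pref (fun a => ¬ red a) hirr htrans
      (fun a b _ hb => Or.inr hb) (NSB ∪ NSR')
    · exact hBne.mono subset_union_left
    · -- ratio 1/2
      apply hdg_ratio_half red (m := NSB.card) (card_pos.mpr hBne)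
      · have : (NSB ∪ NSR').filter red = NSR' := by
          ext x
          simp only [mem_filter, mem_union]
          constructor
          · rintro ⟨hx | hx, hr⟩
            · exact absurd hr (hNSBb x hx).1
            · exact hx
          · intro hx
            exact ⟨Or.inr hx, (hNSR'r x hx).1⟩
        rw [this, hcard']
      · rw [card_union_of_disjoint, hcard']
        · ring
        · rw [disjoint_left]
          intro x hx hx'
          exact (hNSBb x hx).1 (hNSR'r x hx').1
    · -- reds in the core prefer 1/2 to 1
      intro i hi hired
      rcases mem_union.mp hi with hi | hi
      · exact absurd hired (hNSBb i hi).1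
      · exact (hNSR'r i hi).2
    · -- blues in the core prefer 1/2 to 0
      intro j hj hjblue
      rcases mem_union.mp hj with hj | hj
      · exact (hNSBb j hj).2
      · exact absurd (hNSR'r j hj).1 hjblue
    · -- blues outside the core are solo
      intro x hx hxout
      have hxNSB : x ∉ NSB := fun h => hxout (mem_union_left _ h)
      rcases hdichB x hx with hns | hs
      · exact absurd (mem_filter.mpr ⟨mem_univ x, hx, hns⟩) hxNSB
      · rw [hdgMono, if_neg hx]; exact hs
  · -- side = red
    push_neg at hc
    obtain ⟨NSB', hsub', hcard'⟩ := Finset.exists_subset_card_eq hc.le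
    have hNSB'b : ∀ x ∈ NSB', ¬ red x ∧ pref x (1/2 : ℚ) 0 := fun x hx => hNSBb x (hsub' hx)
    apply hdg_main red pref (fun a => red a) hirr htrans
      (fun a b ha _ => Or.inl ha) (NSR ∪ NSB')
    · exact hRne.mono subset_union_left
    · apply hdg_ratio_half red (m := NSR.card) (card_pos.mpr hRne)
      · have : (NSR ∪ NSB').filter red = NSR := by
          ext x
          simp only [mem_filter, mem_union]
          constructor
          · rintro ⟨hx | hx, hr⟩
            · exact hx
            · exact absurd hr (hNSB'b x hx).1
          · intro hx
            exact ⟨Or.inl hx, (hNSRr x hx).1⟩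
        rw [this]
      · rw [card_union_of_disjoint, hcard']
        · ring
        · rw [disjoint_left]
          intro x hx hx'
          exact (hNSB'b x hx').1 (hNSRr x hx).1
    · intro i hi hired
      rcases mem_union.mp hi with hi | hi
      · exact (hNSRr i hi).2
      · exact absurd hired (hNSB'b i hi).1
    · intro j hj hjblue
      rcases mem_union.mp hj with hj | hj
      · exact absurd (hNSRr j hj).1 hjblue
      · exact (hNSB'b j hj).2
    · intro x hx hxout
      have hxNSR : x ∉ NSR := fun h => hxout (mem_union_left _ h)
      rcases hdichR x hx with hns | hs
      · exact absurd (mem_filter.mpr ⟨mem_univ x, hx, hns⟩) hxNSR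
      · rw [hdgMono, if_pos hx]; exact hs
end
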